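/- arXiv:2410.01537 — 3 statements merged into one kernel-verified Lean document; each statement's English description precedes it below -/
import Mathlib

section
/- Let κ, ν ∈ [−1, 1]. Let V, V′, H, H₂, …, H_L, K₂, …, K_L be independent standard Gaussian real random variables on a probability space, and let ξ be a square-integrable real random variable independent of all of them with E[ξ] = 0 and E[ξ²] = ε². Then E[( γ·(ν·V + √(1 − ν²)·V′) + ξ − γ·V·erf(λ(√(d/2)·κ + γ·H)) − Σ_{ℓ=2}^{L} K_ℓ·erf(λ·H_ℓ) )²] = γ² − 2γ²·ν·erf( λ·√(d/2)·κ / √(1 + 2λ²γ²) ) + γ²·ζ(λ·√(d/2)·κ, λ²γ²) + (L − 1)·ζ(0, λ²) + ε². (This is the closed-form expression of the risk of the attention predictor restricted to the invariant manifold, where the pair (ν·V + √(1 − ν²)·V′, V) is a standard Gaussian pair with correlation ν.) -/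
/-!
The error is `R - S`, where `R = γ V (ν - erf (t + λγ H)) + γ √(1 - ν²) V' + ξ` with
`t = λ √(d/2) κ`, and `S = ∑ₗ Kₗ erf (λ Hₗ)`. The summands of `R` and of `S` are centred functions
of disjoint groups of the independent coordinates, so they are orthogonal in `L²` and the risk is
the sum of their second moments. A standard Gaussian factor `X` independent of `G` gives
`E[(X G)²] = E[G²]`, which leaves Gaussian integrals of `erf`; they all reduce to
`E[erf (a + Z)] = erf (a / √(1 + 2v))` for `Z ∼ 𝒩(0, v)`. Both sides vanish at `a = 0` since `erf`
is odd, and their derivatives in `a` agree: `E[exp (-(a + Z)²)]` is computed by completing the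
square in the Gaussian density.
-/

open MeasureTheory ProbabilityTheory Real Filter

noncomputable def erf (u : ℝ) : ℝ := 2 / Real.sqrt Real.pi * ∫ r in (0:ℝ)..u, Real.exp (-r ^ 2)

noncomputable def zeta (t s : ℝ) : ℝ := ∫ g, erf (t + g) ^ 2 ∂(gaussianReal 0 s.toNNReal)

open scoped NNReal

lemma hasDerivAt_erf (u : ℝ) : HasDerivAt erf (2 / √π * exp (-u ^ 2)) u := by
  have hcont : Continuous fun r : ℝ => exp (-r ^ 2) := by fun_prop
  exact (intervalIntegral.integral_hasDerivAt_right (hcont.intervalIntegrable 0 u)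
    (hcont.stronglyMeasurableAtFilter _ _) hcont.continuousAt).const_mul _

@[fun_prop]
lemma continuous_erf : Continuous erf :=
  continuous_iff_continuousAt.2 fun u => (hasDerivAt_erf u).continuousAt

@[fun_prop]
lemma measurable_erf : Measurable erf := continuous_erf.measurable

@[simp]
lemma erf_zero : erf 0 = 0 := by simp [erf]

lemma erf_neg (u : ℝ) : erf (-u) = -erf u := by
  have h := intervalIntegral.integral_comp_neg (a := 0) (b := u) fun r : ℝ => exp (-r ^ 2)
  simp only [neg_zero, neg_sq] at h
  rw [erf, erf, intervalIntegral.integral_symm, ← h, mul_neg]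

lemma erf_nonneg {u : ℝ} (hu : 0 ≤ u) : 0 ≤ erf u :=
  mul_nonneg (by positivity) (intervalIntegral.integral_nonneg hu fun r _ => (exp_pos _).le)

lemma erf_le_one_of_nonneg {u : ℝ} (hu : 0 ≤ u) : erf u ≤ 1 := by
  have hhalf : ∫ r in Set.Ioi (0:ℝ), exp (-r ^ 2) = √π / 2 := by
    simpa using integral_gaussian_Ioi 1
  have hle : ∫ r in (0:ℝ)..u, exp (-r ^ 2) ≤ √π / 2 := by
    rw [intervalIntegral.integral_of_le hu, ← hhalf]
    exact setIntegral_mono_set (by simpa using (integrable_exp_neg_mul_sq one_pos).integrableOn)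
      (ae_of_all _ fun r => (exp_pos _).le) (ae_of_all _ Set.Ioc_subset_Ioi_self)
  have hsqrt : 0 < √π := sqrt_pos.2 pi_pos
  calc erf u ≤ 2 / √π * (√π / 2) := mul_le_mul_of_nonneg_left hle (by positivity)
    _ = 1 := by field_simp

lemma abs_erf_le_one (u : ℝ) : |erf u| ≤ 1 := by
  rcases le_total 0 u with hu | hu
  · rw [abs_of_nonneg (erf_nonneg hu)]
    exact erf_le_one_of_nonneg hu
  · rw [← abs_neg, ← erf_neg, abs_of_nonneg (erf_nonneg (neg_nonneg.2 hu))]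
    exact erf_le_one_of_nonneg (neg_nonneg.2 hu)

lemma memLp_erf_comp {α : Type*} {mα : MeasurableSpace α} {μ : Measure α} [IsFiniteMeasure μ]
    {f : α → ℝ} (hf : AEStronglyMeasurable f μ) (p : ENNReal) :
    MemLp (fun x => erf (f x)) p μ :=
  .of_bound (continuous_erf.comp_aestronglyMeasurable hf) 1
    (ae_of_all _ fun x => by simpa using abs_erf_le_one (f x))

section GaussianIntegrals

variable {v : ℝ≥0}

lemma integral_sq_gaussianReal : ∫ x, x ^ 2 ∂gaussianReal 0 v = v := by
  rw [← variance_id_gaussianReal (μ := 0),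
    variance_of_integral_eq_zero aemeasurable_id (by simp [integral_id_gaussianReal])]
  rfl

lemma integral_exp_neg_sq_add_gaussianReal (hv : v ≠ 0) (a : ℝ) :
    ∫ z, exp (-(a + z) ^ 2) ∂gaussianReal 0 v = exp (-a ^ 2 / (1 + 2 * v)) / √(1 + 2 * v) := by
  have hv' : (0 : ℝ) < v := NNReal.coe_pos.2 (pos_iff_ne_zero.2 hv)
  have hsq : ∀ z : ℝ, gaussianPDFReal 0 v z * exp (-(a + z) ^ 2)
      = (√(2 * π * v))⁻¹ * exp (-a ^ 2 / (1 + 2 * v))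
        * exp (-((1 + 2 * v) / (2 * v)) * (z + 2 * v * a / (1 + 2 * v)) ^ 2) := by
    intro z
    simp only [gaussianPDFReal, mul_assoc, ← exp_add]
    congr 2
    field_simp
    ring
  have hα : π / ((1 + 2 * v) / (2 * v)) = 2 * π * v / (1 + 2 * v) := by field_simp
  simp_rw [integral_gaussianReal_eq_integral_smul hv, smul_eq_mul, hsq, integral_const_mul,
    integral_add_right_eq_self (fun z => exp (-((1 + 2 * v) / (2 * v)) * z ^ 2)),
    integral_gaussian, hα, sqrt_div' _ (by positivity : (0:ℝ) ≤ 1 + 2 * v)]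
  have : 0 < √(2 * π * v) := sqrt_pos.2 (by positivity)
  field_simp

lemma integral_erf_gaussianReal : ∫ z, erf z ∂gaussianReal 0 v = 0 := by
  have h := integral_map (μ := gaussianReal 0 v) (measurable_neg.aemeasurable)
    (continuous_erf.aestronglyMeasurable)
  rw [gaussianReal_map_neg, neg_zero] at h
  simp only [erf_neg, integral_neg] at h
  linarith

lemma hasDerivAt_integral_erf_add_gaussianReal (hv : v ≠ 0) (a : ℝ) :
    HasDerivAt (fun a => ∫ z, erf (a + z) ∂gaussianReal 0 v)
      (2 / √π * (exp (-a ^ 2 / (1 + 2 * v)) / √(1 + 2 * v))) a := by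
  have hbound : ∀ x z : ℝ, ‖2 / √π * exp (-(x + z) ^ 2)‖ ≤ 2 / √π := fun x z => by
    rw [norm_of_nonneg (by positivity)]
    exact mul_le_of_le_one_right (by positivity) (exp_le_one_iff.2 (by nlinarith))
  have h := hasDerivAt_integral_of_dominated_loc_of_deriv_le (μ := gaussianReal 0 v)
    (F := fun x z => erf (x + z)) (F' := fun x z => 2 / √π * exp (-(x + z) ^ 2))
    (bound := fun _ => 2 / √π) (Metric.ball_mem_nhds a one_pos)
    (Eventually.of_forall fun x => by fun_prop)
    ((memLp_erf_comp (by fun_prop) 1).integrable le_rfl)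
    (by fun_prop) (ae_of_all _ fun z x _ => hbound x z) (integrable_const _)
    (ae_of_all _ fun z x _ => (hasDerivAt_erf (x + z)).comp_add_const)
  rw [integral_const_mul, integral_exp_neg_sq_add_gaussianReal hv] at h
  exact h.2

lemma integral_erf_add_gaussianReal (a : ℝ) :
    ∫ z, erf (a + z) ∂gaussianReal 0 v = erf (a / √(1 + 2 * v)) := by
  rcases eq_or_ne v 0 with rfl | hv
  · simp [gaussianReal_zero_var]
  have hderiv : ∀ x, HasDerivAt
      (fun a => ∫ z, erf (a + z) ∂gaussianReal 0 v - erf (a / √(1 + 2 * v))) 0 x := by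
    intro x
    have h := (hasDerivAt_erf (x / √(1 + 2 * v))).comp x ((hasDerivAt_id x).div_const _)
    refine ((hasDerivAt_integral_erf_add_gaussianReal hv x).sub h).congr_deriv ?_
    rw [div_pow, sq_sqrt (by positivity), neg_div]
    ring
  have := is_const_of_deriv_eq_zero (fun x => (hderiv x).differentiableAt)
    (fun x => (hderiv x).deriv) a 0
  simpa [integral_erf_gaussianReal, sub_eq_zero] using this

lemma zeta_coe (a : ℝ) : zeta a v = ∫ z, erf (a + z) ^ 2 ∂gaussianReal 0 v := by
  simp [zeta]

lemma integral_sq_sub_erf_add_gaussianReal (b a : ℝ) :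
    ∫ z, (b - erf (a + z)) ^ 2 ∂gaussianReal 0 v
      = b ^ 2 - 2 * b * erf (a / √(1 + 2 * v)) + zeta a v := by
  have h1 : Integrable (fun z => 2 * b * erf (a + z)) (gaussianReal 0 v) :=
    ((memLp_erf_comp (f := fun z => a + z) (by fun_prop) 1).integrable le_rfl).const_mul _
  have h2 : Integrable (fun z => erf (a + z) ^ 2) (gaussianReal 0 v) :=
    (memLp_erf_comp (f := fun z => a + z) (by fun_prop) 2).integrable_sq
  have h3 : Integrable (fun z => b ^ 2 - 2 * b * erf (a + z)) (gaussianReal 0 v) :=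
    (integrable_const _).sub h1
  simp_rw [sub_sq]
  rw [integral_add h3 h2, integral_sub (integrable_const _) h1,
    integral_const_mul, integral_erf_add_gaussianReal, zeta_coe]
  simp

end GaussianIntegrals

namespace ProbabilityTheory

variable {Ω : Type*} {mΩ : MeasurableSpace Ω} {μ : Measure Ω}

lemma measurable_iSup_comap_of_mem {ι β : Type*} [mβ : MeasurableSpace β] (Y : ι → Ω → β)
    {S : Set ι} {j : ι} (hj : j ∈ S) : Measurable[⨆ i ∈ S, mβ.comap (Y i)] (Y j) :=
  measurable_iff_comap_le.2 (le_iSup₂ (f := fun i (_ : i ∈ S) => mβ.comap (Y i)) j hj)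

lemma iIndepFun.indepFun_of_measurable_iSup {ι β γ γ' : Type*} [mβ : MeasurableSpace β]
    [MeasurableSpace γ] [MeasurableSpace γ'] {Y : ι → Ω → β} (hY : iIndepFun Y μ)
    (hmeas : ∀ i, Measurable (Y i)) {S T : Set ι} (hST : Disjoint S T) {F : Ω → γ} {G : Ω → γ'}
    (hF : Measurable[⨆ i ∈ S, mβ.comap (Y i)] F) (hG : Measurable[⨆ i ∈ T, mβ.comap (Y i)] G) :
    IndepFun F G μ := by
  have h := indep_iSup_of_disjoint (fun i => (hmeas i).comap_le)
    ((iIndepFun_iff_iIndep _ _ _).1 hY) hST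
  rw [IndepFun_iff_Indep]
  exact indep_of_indep_of_le_right (indep_of_indep_of_le_left h hF.comap_le) hG.comap_le

lemma iIndepFun.pairwise_indepFun_of_measurable_iSup {ι κ β γ : Type*} [mβ : MeasurableSpace β]
    [MeasurableSpace γ] {Y : ι → Ω → β} (hY : iIndepFun Y μ) (hmeas : ∀ i, Measurable (Y i))
    {B : κ → Set ι} (hB : Pairwise (Function.onFun Disjoint B)) {F : κ → Ω → γ}
    (hF : ∀ k, Measurable[⨆ i ∈ B k, mβ.comap (Y i)] (F k)) :
    Pairwise fun k l => IndepFun (F k) (F l) μ :=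
  fun _ _ hkl => hY.indepFun_of_measurable_iSup hmeas (hB hkl) (hF _) (hF _)

lemma IndepFun.comp_right {β γ δ : Type*} [MeasurableSpace β] [MeasurableSpace γ]
    [MeasurableSpace δ] {X : Ω → β} {H : Ω → γ} (h : IndepFun X H μ) {ψ : γ → δ}
    (hψ : Measurable ψ) : IndepFun X (fun ω => ψ (H ω)) μ :=
  h.comp measurable_id hψ

lemma IndepFun.memLp_two_mul [IsFiniteMeasure μ] {X G : Ω → ℝ} (hXG : IndepFun X G μ)
    (hX : MemLp X 2 μ) (hG : MemLp G 2 μ) : MemLp (fun ω => X ω * G ω) 2 μ := by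
  refine (memLp_two_iff_integrable_sq (hX.1.mul hG.1)).2 ?_
  simpa [mul_pow, Function.comp_def, Pi.mul_def] using
    (hXG.comp (measurable_id.pow_const 2) (measurable_id.pow_const 2)).integrable_mul
      hX.integrable_sq hG.integrable_sq

lemma integral_add_sq_of_indepFun [IsFiniteMeasure μ] {F G : Ω → ℝ} (hF : MemLp F 2 μ)
    (hG : MemLp G 2 μ) (hFG : IndepFun F G μ) (hG0 : ∫ ω, G ω ∂μ = 0) :
    ∫ ω, (F ω + G ω) ^ 2 ∂μ = ∫ ω, F ω ^ 2 ∂μ + ∫ ω, G ω ^ 2 ∂μ := by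
  have hFG' : Integrable (fun ω => 2 * (F ω * G ω)) μ :=
    (hFG.integrable_mul (hF.integrable one_le_two) (hG.integrable one_le_two)).const_mul 2
  have hcross : ∫ ω, 2 * (F ω * G ω) ∂μ = 0 := by
    rw [integral_const_mul, hFG.integral_fun_mul_eq_mul_integral hF.1 hG.1, hG0, mul_zero,
      mul_zero]
  have hF' : Integrable (fun ω => F ω ^ 2 + 2 * (F ω * G ω)) μ := hF.integrable_sq.add hFG'
  simp_rw [add_sq, mul_assoc]
  rw [integral_add hF' hG.integrable_sq, integral_add hF.integrable_sq hFG', hcross, add_zero]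

lemma integral_sub_sq_of_indepFun [IsFiniteMeasure μ] {F G : Ω → ℝ} (hF : MemLp F 2 μ)
    (hG : MemLp G 2 μ) (hFG : IndepFun F G μ) (hG0 : ∫ ω, G ω ∂μ = 0) :
    ∫ ω, (F ω - G ω) ^ 2 ∂μ = ∫ ω, F ω ^ 2 ∂μ + ∫ ω, G ω ^ 2 ∂μ := by
  simpa [sub_eq_add_neg] using integral_add_sq_of_indepFun hF hG.neg
    (hFG.comp measurable_id measurable_neg) (by simp [integral_neg, hG0])

lemma integral_sum_sq_of_pairwise_indepFun [IsProbabilityMeasure μ] {ι : Type*}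
    {X : ι → Ω → ℝ} {s : Finset ι} (hX : ∀ i ∈ s, MemLp (X i) 2 μ)
    (hX0 : ∀ i ∈ s, ∫ ω, X i ω ∂μ = 0)
    (hindep : Set.Pairwise s fun i j => IndepFun (X i) (X j) μ) :
    ∫ ω, (∑ i ∈ s, X i ω) ^ 2 ∂μ = ∑ i ∈ s, ∫ ω, X i ω ^ 2 ∂μ := by
  have h := IndepFun.variance_sum hX hindep
  rw [Finset.sum_fn] at h
  have hsum0 : ∫ ω, ∑ i ∈ s, X i ω ∂μ = 0 := by
    rw [integral_finsetSum _ fun i hi => (hX i hi).integrable one_le_two]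
    exact Finset.sum_eq_zero hX0
  rw [variance_of_integral_eq_zero (memLp_finsetSum s hX).aemeasurable hsum0,
    Finset.sum_congr rfl fun i hi =>
      variance_of_integral_eq_zero (hX i hi).aemeasurable (hX0 i hi)] at h
  simpa using h

namespace HasLaw

variable {X G : Ω → ℝ}

lemma integral_eq_zero_of_gaussianReal {v : ℝ≥0} (hX : HasLaw X (gaussianReal 0 v) μ) :
    ∫ ω, X ω ∂μ = 0 := by
  rw [hX.integral_eq, integral_id_gaussianReal]

lemma integral_sq_of_gaussianReal {v : ℝ≥0} (hX : HasLaw X (gaussianReal 0 v) μ) :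
    ∫ ω, X ω ^ 2 ∂μ = v := by
  rw [← integral_sq_gaussianReal]
  exact hX.integral_comp (f := fun x => x ^ 2) (by fun_prop)

lemma memLp_two_of_gaussianReal {v : ℝ≥0} (hX : HasLaw X (gaussianReal 0 v) μ) : MemLp X 2 μ :=
  (memLp_map_measure_iff aestronglyMeasurable_id hX.aemeasurable).1
    (hX.map_eq ▸ memLp_id_gaussianReal 2)

lemma integral_mul_eq_zero_of_gaussianReal (hX : HasLaw X (gaussianReal 0 1) μ)
    (hXG : IndepFun X G μ) (hG : AEStronglyMeasurable G μ) : ∫ ω, X ω * G ω ∂μ = 0 := by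
  rw [hXG.integral_fun_mul_eq_mul_integral hX.aemeasurable.aestronglyMeasurable hG,
    hX.integral_eq_zero_of_gaussianReal, zero_mul]

lemma integral_mul_sq_of_gaussianReal (hX : HasLaw X (gaussianReal 0 1) μ)
    (hXG : IndepFun X G μ) (hG : AEMeasurable G μ) :
    ∫ ω, (X ω * G ω) ^ 2 ∂μ = ∫ ω, G ω ^ 2 ∂μ := by
  simp_rw [mul_pow]
  rw [hXG.integral_fun_comp_mul_comp (f := fun x => x ^ 2) (g := fun x => x ^ 2) hX.aemeasurable
    hG (by fun_prop) (by fun_prop), hX.integral_sq_of_gaussianReal, NNReal.coe_one, one_mul]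

end HasLaw

end ProbabilityTheory

section GaussianModel

variable {Ω : Type*} [MeasurableSpace Ω] {P : Measure Ω}

lemma integral_sq_sub_erf_const_add_mul {H : Ω → ℝ} (hH : HasLaw H (gaussianReal 0 1) P)
    (b a c : ℝ) :
    ∫ ω, (b - erf (a + c * H ω)) ^ 2 ∂P
      = b ^ 2 - 2 * b * erf (a / √(1 + 2 * c ^ 2)) + zeta a (c ^ 2) := by
  have hcH := gaussianReal_const_mul hH c
  simp only [mul_zero, mul_one] at hcH
  have h := hcH.integral_comp (f := fun z => (b - erf (a + z)) ^ 2) (by fun_prop)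
  rw [Function.comp_def] at h
  rw [h, integral_sq_sub_erf_add_gaussianReal]
  rfl

lemma integral_sq_mul_sub_erf {X H : Ω → ℝ} (hX : HasLaw X (gaussianReal 0 1) P)
    (hH : HasLaw H (gaussianReal 0 1) P) (hXH : IndepFun X H P) (b a c : ℝ) :
    ∫ ω, (X ω * (b - erf (a + c * H ω))) ^ 2 ∂P
      = b ^ 2 - 2 * b * erf (a / √(1 + 2 * c ^ 2)) + zeta a (c ^ 2) := by
  rw [hX.integral_mul_sq_of_gaussianReal
      (hXH.comp_right (ψ := fun x => b - erf (a + c * x)) (by fun_prop)) (by fun_prop),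
    integral_sq_sub_erf_const_add_mul hH]

lemma integral_sq_mul_erf {K H : Ω → ℝ} (hK : HasLaw K (gaussianReal 0 1) P)
    (hH : HasLaw H (gaussianReal 0 1) P) (hKH : IndepFun K H P) (c : ℝ) :
    ∫ ω, (K ω * erf (c * H ω)) ^ 2 ∂P = zeta 0 (c ^ 2) := by
  simpa using integral_sq_mul_sub_erf hK hH hKH 0 0 c

lemma memLp_mul_erf [IsFiniteMeasure P] {K H : Ω → ℝ} (hK : HasLaw K (gaussianReal 0 1) P)
    (hKH : IndepFun K H P) (hH : AEMeasurable H P) (c : ℝ) :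
    MemLp (fun ω => K ω * erf (c * H ω)) 2 P :=
  (hKH.comp_right (ψ := fun x => erf (c * x)) (by fun_prop)).memLp_two_mul
    hK.memLp_two_of_gaussianReal (memLp_erf_comp (by fun_prop) 2)

lemma integral_mul_erf {K H : Ω → ℝ} (hK : HasLaw K (gaussianReal 0 1) P)
    (hKH : IndepFun K H P) (hH : AEMeasurable H P) (c : ℝ) :
    ∫ ω, K ω * erf (c * H ω) ∂P = 0 :=
  hK.integral_mul_eq_zero_of_gaussianReal
    (hKH.comp_right (ψ := fun x => erf (c * x)) (by fun_prop)) (by fun_prop)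

variable {Y : ℕ → Ω → ℝ}

lemma memLp_residual [IsFiniteMeasure P] (hindep : iIndepFun Y P) (hH : Measurable (Y 1))
    (hV : HasLaw (Y 2) (gaussianReal 0 1) P) (hV' : HasLaw (Y 3) (gaussianReal 0 1) P)
    (hξ : MemLp (Y 0) 2 P) (α β ν a c : ℝ) :
    MemLp (fun ω => α * (Y 2 ω * (ν - erf (a + c * Y 1 ω))) + β * Y 3 ω + Y 0 ω) 2 P := by
  have hA := ((hindep.indepFun (by decide : (2 : ℕ) ≠ 1)).comp_right
    (ψ := fun x => ν - erf (a + c * x)) (by fun_prop)).memLp_two_mul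
    hV.memLp_two_of_gaussianReal ((memLp_const ν).sub (memLp_erf_comp (by fun_prop) 2))
  exact ((hA.const_mul α).add (hV'.memLp_two_of_gaussianReal.const_mul β)).add hξ

lemma integral_sq_residual [IsFiniteMeasure P] (hmeas : ∀ i, Measurable (Y i))
    (hindep : iIndepFun Y P) (hH : HasLaw (Y 1) (gaussianReal 0 1) P)
    (hV : HasLaw (Y 2) (gaussianReal 0 1) P) (hV' : HasLaw (Y 3) (gaussianReal 0 1) P)
    (hξ : MemLp (Y 0) 2 P) (hξ0 : ∫ ω, Y 0 ω ∂P = 0) (α β ν a c : ℝ) :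
    ∫ ω, (α * (Y 2 ω * (ν - erf (a + c * Y 1 ω))) + β * Y 3 ω + Y 0 ω) ^ 2 ∂P
      = α ^ 2 * (ν ^ 2 - 2 * ν * erf (a / √(1 + 2 * c ^ 2)) + zeta a (c ^ 2)) + β ^ 2
        + ∫ ω, Y 0 ω ^ 2 ∂P := by
  have hY {S : Set ℕ} {j : ℕ} (hj : j ∈ S) := measurable_iSup_comap_of_mem Y hj
  set A : Ω → ℝ := fun ω => α * (Y 2 ω * (ν - erf (a + c * Y 1 ω)))
  set B : Ω → ℝ := fun ω => β * Y 3 ω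
  have hA : MemLp A 2 P :=
    (((hindep.indepFun (by decide : (2 : ℕ) ≠ 1)).comp_right
      (ψ := fun x => ν - erf (a + c * x)) (by fun_prop)).memLp_two_mul
      hV.memLp_two_of_gaussianReal
      ((memLp_const ν).sub (memLp_erf_comp (by fun_prop) 2))).const_mul α
  have hB : MemLp B 2 P := hV'.memLp_two_of_gaussianReal.const_mul β
  have hAB : IndepFun A B P := by
    refine hindep.indepFun_of_measurable_iSup hmeas (S := {1, 2}) (T := {3})
      (Set.disjoint_singleton_right.2 (by simp)) ?_ ((hY (Set.mem_singleton 3)).const_mul β)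
    have := hY (S := {1, 2}) (j := 1) (by simp)
    have := hY (S := {1, 2}) (j := 2) (by simp)
    fun_prop
  have hABξ : IndepFun (A + B) (Y 0) P := by
    refine hindep.indepFun_of_measurable_iSup hmeas (S := {1, 2, 3}) (T := {0})
      (Set.disjoint_singleton_right.2 (by simp)) ?_ (hY (Set.mem_singleton 0))
    have := hY (S := {1, 2, 3}) (j := 1) (by simp)
    have := hY (S := {1, 2, 3}) (j := 2) (by simp)
    have := hY (S := {1, 2, 3}) (j := 3) (by simp)
    fun_prop
  have hB0 : ∫ ω, B ω ∂P = 0 := by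
    simp [B, integral_const_mul, hV'.integral_eq_zero_of_gaussianReal]
  show ∫ ω, ((A + B) ω + Y 0 ω) ^ 2 ∂P = _
  rw [integral_add_sq_of_indepFun (hA.add hB) hξ hABξ hξ0, Pi.add_def,
    integral_add_sq_of_indepFun hA hB hAB hB0]
  simp_rw [A, B, mul_pow, integral_const_mul]
  rw [← funext fun ω => mul_pow (Y 2 ω) _ 2,
    integral_sq_mul_sub_erf hV hH (hindep.indepFun (by decide)),
    hV'.integral_sq_of_gaussianReal, NNReal.coe_one, mul_one]

lemma memLp_sum_heads [IsFiniteMeasure P] (hmeas : ∀ i, Measurable (Y i))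
    (hindep : iIndepFun Y P) (c : ℝ) {s : Finset ℕ}
    (hK : ∀ ℓ ∈ s, HasLaw (Y (2 * ℓ + 1)) (gaussianReal 0 1) P) :
    MemLp (fun ω => ∑ ℓ ∈ s, Y (2 * ℓ + 1) ω * erf (c * Y (2 * ℓ) ω)) 2 P :=
  memLp_finsetSum s fun ℓ hℓ =>
    memLp_mul_erf (hK ℓ hℓ) (hindep.indepFun (by omega)) (hmeas _).aemeasurable c

lemma integral_sum_heads [IsFiniteMeasure P] (hmeas : ∀ i, Measurable (Y i))
    (hindep : iIndepFun Y P) (c : ℝ) {s : Finset ℕ}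
    (hK : ∀ ℓ ∈ s, HasLaw (Y (2 * ℓ + 1)) (gaussianReal 0 1) P) :
    ∫ ω, ∑ ℓ ∈ s, Y (2 * ℓ + 1) ω * erf (c * Y (2 * ℓ) ω) ∂P = 0 := by
  rw [integral_finsetSum _ fun ℓ hℓ => ((memLp_mul_erf (hK ℓ hℓ) (hindep.indepFun (by omega))
    (hmeas _).aemeasurable c).integrable one_le_two)]
  exact Finset.sum_eq_zero fun ℓ hℓ =>
    integral_mul_erf (hK ℓ hℓ) (hindep.indepFun (by omega)) (hmeas _).aemeasurable c

lemma integral_sq_sum_heads [IsProbabilityMeasure P] (hmeas : ∀ i, Measurable (Y i))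
    (hindep : iIndepFun Y P) (c : ℝ) {s : Finset ℕ}
    (hH : ∀ ℓ ∈ s, HasLaw (Y (2 * ℓ)) (gaussianReal 0 1) P)
    (hK : ∀ ℓ ∈ s, HasLaw (Y (2 * ℓ + 1)) (gaussianReal 0 1) P) :
    ∫ ω, (∑ ℓ ∈ s, Y (2 * ℓ + 1) ω * erf (c * Y (2 * ℓ) ω)) ^ 2 ∂P
      = s.card * zeta 0 (c ^ 2) := by
  have hY {S : Set ℕ} {j : ℕ} (hj : j ∈ S) := measurable_iSup_comap_of_mem Y hj
  have hpair := hindep.pairwise_indepFun_of_measurable_iSup hmeas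
    (B := fun ℓ => {2 * ℓ, 2 * ℓ + 1}) (F := fun ℓ ω => Y (2 * ℓ + 1) ω * erf (c * Y (2 * ℓ) ω))
    (fun ℓ m hℓm => by simp [Function.onFun, Set.disjoint_left]; omega)
    (fun ℓ => by
      have := hY (S := {2 * ℓ, 2 * ℓ + 1}) (j := 2 * ℓ) (by simp)
      have := hY (S := {2 * ℓ, 2 * ℓ + 1}) (j := 2 * ℓ + 1) (by simp)
      fun_prop)
  rw [integral_sum_sq_of_pairwise_indepFun
    (fun ℓ hℓ => memLp_mul_erf (hK ℓ hℓ) (hindep.indepFun (by omega)) (hmeas _).aemeasurable c)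
    (fun ℓ hℓ => integral_mul_erf (hK ℓ hℓ) (hindep.indepFun (by omega)) (hmeas _).aemeasurable c)
    (fun ℓ _ m _ hℓm => hpair hℓm),
    Finset.sum_congr rfl fun ℓ hℓ =>
      integral_sq_mul_erf (hK ℓ hℓ) (hH ℓ hℓ) (hindep.indepFun (by omega)) c]
  simp

lemma indepFun_residual_sum_heads (hmeas : ∀ i, Measurable (Y i)) (hindep : iIndepFun Y P)
    (α β ν a c lam : ℝ) (L : ℕ) :
    IndepFun (fun ω => α * (Y 2 ω * (ν - erf (a + c * Y 1 ω))) + β * Y 3 ω + Y 0 ω)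
      (fun ω => ∑ ℓ ∈ Finset.Icc 2 L, Y (2 * ℓ + 1) ω * erf (lam * Y (2 * ℓ) ω)) P := by
  have hY {S : Set ℕ} {j : ℕ} (hj : j ∈ S) := measurable_iSup_comap_of_mem Y hj
  refine hindep.indepFun_of_measurable_iSup hmeas (S := Set.Iio 4) (T := Set.Ici 4)
    (Set.Iio_disjoint_Ici le_rfl) ?_ ?_
  · have := hY (S := Set.Iio 4) (j := 0) (by simp)
    have := hY (S := Set.Iio 4) (j := 1) (by simp)
    have := hY (S := Set.Iio 4) (j := 2) (by simp)
    have := hY (S := Set.Iio 4) (j := 3) (by simp)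
    fun_prop
  · refine Finset.measurable_sum _ fun ℓ hℓ => ?_
    have := hY (S := Set.Ici 4) (j := 2 * ℓ + 1) (by simp at hℓ ⊢; omega)
    have := hY (S := Set.Ici 4) (j := 2 * ℓ) (by simp at hℓ ⊢; omega)
    fun_prop

end GaussianModel

/-- Here `Y 0 = ξ`, `Y 1 = H`, `Y 2 = V`, `Y 3 = V′`, and `Y (2ℓ) = H_ℓ`, `Y (2ℓ + 1) = K_ℓ`
for `2 ≤ ℓ ≤ L`. -/
theorem stmt1_general (d L : ℕ) (hL : 0 < L) (γ lam ε : ℝ)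
    (κ ν : ℝ) (hν : ν ∈ Set.Icc (-1 : ℝ) 1)
    {Ω : Type*} [MeasurableSpace Ω] (P : Measure Ω) [IsProbabilityMeasure P]
    (Y : ℕ → Ω → ℝ) (hmeas : ∀ i, Measurable (Y i))
    (hindep : iIndepFun Y P)
    (hH : Measure.map (Y 1) P = gaussianReal 0 1)
    (hV : Measure.map (Y 2) P = gaussianReal 0 1)
    (hV' : Measure.map (Y 3) P = gaussianReal 0 1)
    (hHl : ∀ ℓ, 2 ≤ ℓ → ℓ ≤ L → Measure.map (Y (2 * ℓ)) P = gaussianReal 0 1)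
    (hKl : ∀ ℓ, 2 ≤ ℓ → ℓ ≤ L → Measure.map (Y (2 * ℓ + 1)) P = gaussianReal 0 1)
    (hxi2 : MemLp (Y 0) 2 P)
    (hximean : ∫ ω, Y 0 ω ∂P = 0)
    (hxivar : ∫ ω, (Y 0 ω) ^ 2 ∂P = ε ^ 2) :
    ∫ ω, (γ * (ν * Y 2 ω + Real.sqrt (1 - ν ^ 2) * Y 3 ω) + Y 0 ω
        - γ * Y 2 ω * erf (lam * (Real.sqrt ((d : ℝ) / 2) * κ + γ * Y 1 ω))
        - ∑ ℓ ∈ Finset.Icc 2 L, Y (2 * ℓ + 1) ω * erf (lam * Y (2 * ℓ) ω)) ^ 2 ∂P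
      = γ ^ 2
        - 2 * γ ^ 2 * ν * erf (lam * Real.sqrt ((d : ℝ) / 2) * κ /
            Real.sqrt (1 + 2 * lam ^ 2 * γ ^ 2))
        + γ ^ 2 * zeta (lam * Real.sqrt ((d : ℝ) / 2) * κ) (lam ^ 2 * γ ^ 2)
        + ((L : ℝ) - 1) * zeta 0 (lam ^ 2) + ε ^ 2 := by
  have law {i : ℕ} (h : Measure.map (Y i) P = gaussianReal 0 1) :
      HasLaw (Y i) (gaussianReal 0 1) P := ⟨(hmeas i).aemeasurable, h⟩
  have hHs : ∀ ℓ ∈ Finset.Icc 2 L, HasLaw (Y (2 * ℓ)) (gaussianReal 0 1) P := fun ℓ hℓ =>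
    law (hHl ℓ (Finset.mem_Icc.1 hℓ).1 (Finset.mem_Icc.1 hℓ).2)
  have hKs : ∀ ℓ ∈ Finset.Icc 2 L, HasLaw (Y (2 * ℓ + 1)) (gaussianReal 0 1) P := fun ℓ hℓ =>
    law (hKl ℓ (Finset.mem_Icc.1 hℓ).1 (Finset.mem_Icc.1 hℓ).2)
  set t := lam * √((d : ℝ) / 2) * κ
  have hsplit : ∀ ω, γ * (ν * Y 2 ω + √(1 - ν ^ 2) * Y 3 ω) + Y 0 ω
        - γ * Y 2 ω * erf (lam * (√((d : ℝ) / 2) * κ + γ * Y 1 ω))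
        - ∑ ℓ ∈ Finset.Icc 2 L, Y (2 * ℓ + 1) ω * erf (lam * Y (2 * ℓ) ω)
      = (γ * (Y 2 ω * (ν - erf (t + lam * γ * Y 1 ω))) + γ * √(1 - ν ^ 2) * Y 3 ω + Y 0 ω)
        - ∑ ℓ ∈ Finset.Icc 2 L, Y (2 * ℓ + 1) ω * erf (lam * Y (2 * ℓ) ω) := fun ω => by
    rw [show lam * (√((d : ℝ) / 2) * κ + γ * Y 1 ω) = t + lam * γ * Y 1 ω by ring]
    ring
  simp_rw [hsplit]
  rw [integral_sub_sq_of_indepFun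
      (memLp_residual hindep (hmeas 1) (law hV) (law hV') hxi2 _ _ _ _ _)
      (memLp_sum_heads hmeas hindep lam hKs)
      (indepFun_residual_sum_heads hmeas hindep _ _ _ _ _ _ _)
      (integral_sum_heads hmeas hindep lam hKs),
    integral_sq_residual hmeas hindep (law hH) (law hV) (law hV') hxi2 hximean,
    integral_sq_sum_heads hmeas hindep lam hHs hKs, hxivar, mul_pow γ,
    sq_sqrt (by nlinarith [hν.1, hν.2]), Nat.card_Icc, Nat.cast_sub (by omega),
    show (lam * γ) ^ 2 = lam ^ 2 * γ ^ 2 by ring,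
    show 1 + 2 * (lam ^ 2 * γ ^ 2) = 1 + 2 * lam ^ 2 * γ ^ 2 by ring]
  push_cast
  ring

/-- Closed-form expression of the risk of the attention predictor restricted to the
invariant manifold. Here `Y 0 = ξ`, `Y 1 = H`, `Y 2 = V`, `Y 3 = V′`, and for
`2 ≤ ℓ ≤ L`, `Y (2ℓ) = H_ℓ` and `Y (2ℓ + 1) = K_ℓ`. The pair
`(ν·V + √(1 − ν²)·V′, V)` is a standard Gaussian pair with correlation `ν`. -/
theorem stmt1 (d L : ℕ) (hd : 0 < d) (hL : 0 < L) (γ lam ε : ℝ)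
    (hγ : 0 < γ) (hlam : 0 < lam) (hε : 0 ≤ ε)
    (κ ν : ℝ) (hκ : κ ∈ Set.Icc (-1 : ℝ) 1) (hν : ν ∈ Set.Icc (-1 : ℝ) 1)
    {Ω : Type*} [MeasurableSpace Ω] (P : Measure Ω) [IsProbabilityMeasure P]
    (Y : ℕ → Ω → ℝ) (hmeas : ∀ i, Measurable (Y i))
    (hindep : iIndepFun Y P)
    (hH : Measure.map (Y 1) P = gaussianReal 0 1)
    (hV : Measure.map (Y 2) P = gaussianReal 0 1)
    (hV' : Measure.map (Y 3) P = gaussianReal 0 1)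
    (hHl : ∀ ℓ, 2 ≤ ℓ → ℓ ≤ L → Measure.map (Y (2 * ℓ)) P = gaussianReal 0 1)
    (hKl : ∀ ℓ, 2 ≤ ℓ → ℓ ≤ L → Measure.map (Y (2 * ℓ + 1)) P = gaussianReal 0 1)
    (hxi2 : MemLp (Y 0) 2 P)
    (hximean : ∫ ω, Y 0 ω ∂P = 0)
    (hxivar : ∫ ω, (Y 0 ω) ^ 2 ∂P = ε ^ 2) :
    ∫ ω, (γ * (ν * Y 2 ω + Real.sqrt (1 - ν ^ 2) * Y 3 ω) + Y 0 ω
        - γ * Y 2 ω * erf (lam * (Real.sqrt ((d : ℝ) / 2) * κ + γ * Y 1 ω))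
        - ∑ ℓ ∈ Finset.Icc 2 L, Y (2 * ℓ + 1) ω * erf (lam * Y (2 * ℓ) ω)) ^ 2 ∂P
      = γ ^ 2
        - 2 * γ ^ 2 * ν * erf (lam * Real.sqrt ((d : ℝ) / 2) * κ /
            Real.sqrt (1 + 2 * lam ^ 2 * γ ^ 2))
        + γ ^ 2 * zeta (lam * Real.sqrt ((d : ℝ) / 2) * κ) (lam ^ 2 * γ ^ 2)
        + ((L : ℝ) - 1) * zeta 0 (lam ^ 2) + ε ^ 2 :=
  stmt1_general d L hL γ lam ε κ ν hν P Y hmeas hindep hH hV hV' hHl hKl hxi2 hximean hxivar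
end

section
/- Let L be a positive integer, γ > 0, and let p₁, …, p_L be nonnegative reals with p₁ + ⋯ + p_L = 1. Then γ⁴ · Σ_{j=1}^{L} p_j² / (1 + p_j(γ² − 1)) ≤ γ²·(γ² + 1) · max_{1 ≤ j ≤ L} p_j. In particular, ε² + γ² − γ⁴·Σ_{j=1}^{L} p_j² / (1 + p_j(γ² − 1)) ≥ ε² + γ² − γ²(γ² + 1)·max_{1 ≤ j ≤ L} p_j for any ε ≥ 0. (This is the lower bound on the risk of the optimal linear predictor for single-location regression, where p_j is the probability that the informative token is at position j; note that each denominator satisfies 1 + p_j(γ² − 1) ≥ min(1, γ²) > 0.) -/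
/-! Termwise, `γ⁴ p² / (1 + p (γ² - 1)) ≤ γ² (γ² + 1) p²` for `0 ≤ p ≤ 1`, and
`∑ pⱼ² ≤ (max pⱼ) ∑ pⱼ = max pⱼ`. -/

open Finset

/- With `D = 1 + p (γ² - 1) = (1 - p) + p γ² ≥ 0`, the gap is
`γ² (γ² + 1) p² D - γ⁴ p² = γ² p² (1 - p + p γ⁴) ≥ 0`; if `D = 0` the left side is the junk `0`. -/
theorem mul_sq_div_one_add_mul_le {p : ℝ} (hp₀ : 0 ≤ p) (hp₁ : p ≤ 1) (γ : ℝ) :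
    γ ^ 4 * (p ^ 2 / (1 + p * (γ ^ 2 - 1))) ≤ γ ^ 2 * (γ ^ 2 + 1) * p ^ 2 := by
  have hD : 0 ≤ 1 + p * (γ ^ 2 - 1) := by nlinarith [mul_nonneg hp₀ (sq_nonneg γ)]
  rcases hD.eq_or_lt with hD | hD
  · rw [← hD, div_zero, mul_zero]
    positivity
  rw [mul_div_assoc', div_le_iff₀ hD]
  have hgap : 0 ≤ γ ^ 2 * p ^ 2 * (1 - p + p * γ ^ 4) := by
    have : 0 ≤ 1 - p + p * γ ^ 4 := by nlinarith [mul_nonneg hp₀ (by positivity : (0 : ℝ) ≤ γ ^ 4)]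
    positivity
  nlinarith [hgap]

theorem sum_sq_le_sup'_mul_sum {ι : Type*} {s : Finset ι} (hs : s.Nonempty) {f : ι → ℝ}
    (hf : ∀ i ∈ s, 0 ≤ f i) : ∑ i ∈ s, f i ^ 2 ≤ s.sup' hs f * ∑ i ∈ s, f i := by
  rw [mul_sum]
  exact sum_le_sum fun i hi => by
    rw [sq]
    exact mul_le_mul_of_nonneg_right (le_sup' f hi) (hf i hi)

theorem stmt3_general (L : ℕ) (hL : 0 < L) (γ ε : ℝ)
    (p : Fin L → ℝ) (hp : ∀ j, 0 ≤ p j) (hsum : ∑ j, p j = 1) :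
    γ ^ 4 * ∑ j, (p j) ^ 2 / (1 + p j * (γ ^ 2 - 1))
      ≤ γ ^ 2 * (γ ^ 2 + 1) *
        Finset.univ.sup' (Finset.univ_nonempty_iff.mpr (Fin.pos_iff_nonempty.mp hL)) p
    ∧ ε ^ 2 + γ ^ 2 - γ ^ 4 * ∑ j, (p j) ^ 2 / (1 + p j * (γ ^ 2 - 1))
      ≥ ε ^ 2 + γ ^ 2 - γ ^ 2 * (γ ^ 2 + 1) *
        Finset.univ.sup' (Finset.univ_nonempty_iff.mpr (Fin.pos_iff_nonempty.mp hL)) p := by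
  have hp₁ : ∀ j, p j ≤ 1 := fun j =>
    hsum ▸ single_le_sum (fun i _ => hp i) (mem_univ j)
  have hbound := calc
    γ ^ 4 * ∑ j, (p j) ^ 2 / (1 + p j * (γ ^ 2 - 1))
      ≤ γ ^ 2 * (γ ^ 2 + 1) * ∑ j, p j ^ 2 := by
        rw [mul_sum, mul_sum]
        exact sum_le_sum fun j _ => mul_sq_div_one_add_mul_le (hp j) (hp₁ j) γ
    _ ≤ γ ^ 2 * (γ ^ 2 + 1) *
        Finset.univ.sup' (Finset.univ_nonempty_iff.mpr (Fin.pos_iff_nonempty.mp hL)) p := by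
        have hsq := sum_sq_le_sup'_mul_sum
          (Finset.univ_nonempty_iff.mpr (Fin.pos_iff_nonempty.mp hL)) fun j _ => hp j
        rw [hsum, mul_one] at hsq
        gcongr
  exact ⟨hbound, by linarith⟩

/-- Lower bound on the risk of the optimal linear predictor for single-location
regression, where `p j` is the probability that the informative token is at
position `j`. -/
theorem stmt3 (L : ℕ) (hL : 0 < L) (γ ε : ℝ) (hγ : 0 < γ) (hε : 0 ≤ ε)
    (p : Fin L → ℝ) (hp : ∀ j, 0 ≤ p j) (hsum : ∑ j, p j = 1) :
    γ ^ 4 * ∑ j, (p j) ^ 2 / (1 + p j * (γ ^ 2 - 1))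
      ≤ γ ^ 2 * (γ ^ 2 + 1) *
        Finset.univ.sup' (Finset.univ_nonempty_iff.mpr (Fin.pos_iff_nonempty.mp hL)) p
    ∧ ε ^ 2 + γ ^ 2 - γ ^ 4 * ∑ j, (p j) ^ 2 / (1 + p j * (γ ^ 2 - 1))
      ≥ ε ^ 2 + γ ^ 2 - γ ^ 2 * (γ ^ 2 + 1) *
        Finset.univ.sup' (Finset.univ_nonempty_iff.mpr (Fin.pos_iff_nonempty.mp hL)) p :=
  stmt3_general L hL γ ε p hp hsum
end

section
/- Assume d ≥ 1, L ≥ 1, γ > 0, λ > 0. There exists ᾱ > 0 such that for every step size α with 0 < α ≤ ᾱ and every (κ, ν) ∈ [−1, 1]², R(g_α(κ, ν)) − R(κ, ν) ≤ −(α/2)·[ (∂κR(κ, ν))²·(1 − κ²) + (∂νR(κ, ν))²·(1 − ν²) ]. In particular the reduced risk R is nonincreasing along the PGD iterates. -/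
/-!
The reduced risk is affine in `ν`: `R(κ, ν) = ν F(κ) + H(κ)`, where `F` is a rescaled `erf` and `H`
a rescaled Gaussian average of `erf²`. Since `erf` has bounded derivatives of order one and two,
`F`, `F'`, `H'` are bounded and `F'`, `H'` are Lipschitz, all with one explicit constant `M`.
A first-order Taylor expansion in `κ` bounds `R(κ', ν') - R(κ, ν)` by the linear term
`∂κR Δκ + ∂νR Δν` plus `M (2 Δκ² + |Δκ| |Δν|)`. In each coordinate the normalized step
`x ↦ (x - α g (1 - x²)) / √(1 + α² g² (1 - x²))` moves `x` by at most `2 α |g| (1 - x²)` and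
lowers `g x` by at least `(3/4) α g² (1 - x²)` once `α |g| ≤ 1/4`; for `α ≤ 1/(40 M)` the quadratic
remainder eats at most a third of that gain.
-/

open MeasureTheory ProbabilityTheory Real Filter

/-- The reduced risk `R(κ, ν)` on the invariant manifold. -/
noncomputable def Rred (d L : ℕ) (γ lam ε : ℝ) (κ ν : ℝ) : ℝ :=
  γ ^ 2 - 2 * γ ^ 2 * ν * erf (lam * Real.sqrt ((d : ℝ) / 2) * κ /
      Real.sqrt (1 + 2 * lam ^ 2 * γ ^ 2))
    + γ ^ 2 * zeta (lam * Real.sqrt ((d : ℝ) / 2) * κ) (lam ^ 2 * γ ^ 2)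
    + ((L : ℝ) - 1) * zeta 0 (lam ^ 2) + ε ^ 2

/-- Partial derivative `∂κR` of the reduced risk with respect to its first argument. -/
noncomputable def dkR (d L : ℕ) (γ lam ε : ℝ) (κ ν : ℝ) : ℝ :=
  deriv (fun x => Rred d L γ lam ε x ν) κ

/-- Partial derivative `∂νR` of the reduced risk with respect to its second argument. -/
noncomputable def dvR (d L : ℕ) (γ lam ε : ℝ) (κ ν : ℝ) : ℝ :=
  deriv (fun y => Rred d L γ lam ε κ y) ν

/-- The PGD map `g_α`. -/
noncomputable def pgd (d L : ℕ) (γ lam ε α : ℝ) (p : ℝ × ℝ) : ℝ × ℝ :=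
  ((p.1 - α * dkR d L γ lam ε p.1 p.2 * (1 - p.1 ^ 2)) /
      Real.sqrt (1 + α ^ 2 * (dkR d L γ lam ε p.1 p.2) ^ 2 * (1 - p.1 ^ 2)),
   (p.2 - α * dvR d L γ lam ε p.1 p.2 * (1 - p.2 ^ 2)) /
      Real.sqrt (1 + α ^ 2 * (dvR d L γ lam ε p.1 p.2) ^ 2 * (1 - p.2 ^ 2)))

/-- The square `[−1, 1]²`. -/
def sqIcc : Set (ℝ × ℝ) := {p | p.1 ∈ Set.Icc (-1 : ℝ) 1 ∧ p.2 ∈ Set.Icc (-1 : ℝ) 1}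

open Set

lemma abs_sub_le_of_hasDerivAt {f f' : ℝ → ℝ} {C : ℝ} (hf : ∀ x, HasDerivAt f (f' x) x)
    (hC : ∀ x, |f' x| ≤ C) (x y : ℝ) : |f y - f x| ≤ C * |y - x| :=
  convex_univ.norm_image_sub_le_of_norm_hasDerivWithin_le (fun x _ => (hf x).hasDerivWithinAt)
    (fun x _ => hC x) (mem_univ x) (mem_univ y)

lemma abs_sub_sub_mul_le_of_lipschitz_deriv {f f' : ℝ → ℝ} {K : ℝ}
    (hf : ∀ x, HasDerivAt f (f' x) x) (hf' : ∀ x y, |f' y - f' x| ≤ K * |y - x|) (x y : ℝ) :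
    |f y - f x - f' x * (y - x)| ≤ K * (y - x) ^ 2 := by
  have hK : 0 ≤ K := by simpa using (abs_nonneg _).trans (hf' x (x + 1))
  have hg : ∀ t ∈ uIcc x y,
      HasDerivWithinAt (fun t => f t - f' x * t) (f' t - f' x) (uIcc x y) t := fun t _ => by
    simpa using ((hf t).fun_sub ((hasDerivAt_id t).const_mul (f' x))).hasDerivWithinAt
  have := (convex_uIcc x y).norm_image_sub_le_of_norm_hasDerivWithin_le hg
    (fun t ht => (hf' x t).trans (mul_le_mul_of_nonneg_left (abs_sub_left_of_mem_uIcc ht) hK))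
    left_mem_uIcc right_mem_uIcc
  rw [Real.norm_eq_abs, Real.norm_eq_abs] at this
  calc |f y - f x - f' x * (y - x)| = |f y - f' x * y - (f x - f' x * x)| := by
        congr 1; ring
    _ ≤ K * |y - x| * |y - x| := this
    _ = K * (y - x) ^ 2 := by rw [mul_assoc, ← sq, sq_abs]

noncomputable def erfDeriv (u : ℝ) : ℝ := 2 / √π * exp (-u ^ 2)

lemma two_div_sqrt_pi_le_two : 2 / √π ≤ 2 := by
  have : 1 ≤ √π := Real.one_le_sqrt.mpr (by linarith [Real.pi_gt_three])
  rw [div_le_iff₀ (by positivity)]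
  linarith

lemma hasDerivAt_erf_s8 (u : ℝ) : HasDerivAt erf (erfDeriv u) u := by
  have hcont : Continuous fun r : ℝ => exp (-r ^ 2) := by fun_prop
  exact (intervalIntegral.integral_hasDerivAt_right (hcont.intervalIntegrable 0 u)
    (hcont.stronglyMeasurableAtFilter _ _) hcont.continuousAt).const_mul _

lemma abs_erf_le_two (u : ℝ) : |erf u| ≤ 2 := by
  have hint : Integrable fun r : ℝ => exp (-r ^ 2) := by
    simpa using integrable_exp_neg_mul_sq (b := (1 : ℝ)) one_pos
  have hI : |∫ r in (0 : ℝ)..u, exp (-r ^ 2)| ≤ √π :=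
    calc |∫ r in (0 : ℝ)..u, exp (-r ^ 2)| = |∫ r in uIoc 0 u, exp (-r ^ 2)| :=
          by simpa only [Real.norm_eq_abs] using
            intervalIntegral.norm_integral_eq_norm_integral_uIoc (fun r : ℝ => exp (-r ^ 2))
      _ = ∫ r in uIoc 0 u, exp (-r ^ 2) := abs_of_nonneg (integral_nonneg fun _ => (exp_pos _).le)
      _ ≤ ∫ r, exp (-r ^ 2) := setIntegral_le_integral hint (.of_forall fun _ => (exp_pos _).le)
      _ = √π := by simpa using integral_gaussian 1
  rw [erf, abs_mul, abs_of_pos (by positivity : (0 : ℝ) < 2 / √π)]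
  calc 2 / √π * |∫ r in (0 : ℝ)..u, exp (-r ^ 2)| ≤ 2 / √π * √π := by gcongr
    _ = 2 := div_mul_cancel₀ _ (by positivity)

lemma abs_erfDeriv_le_two (u : ℝ) : |erfDeriv u| ≤ 2 := by
  rw [erfDeriv, abs_of_pos (by positivity)]
  calc 2 / √π * exp (-u ^ 2) ≤ 2 * 1 := by
        gcongr
        · exact two_div_sqrt_pi_le_two
        · exact exp_le_one_iff.mpr (by nlinarith)
    _ = 2 := mul_one 2

lemma hasDerivAt_erfDeriv (u : ℝ) : HasDerivAt erfDeriv (-2 * u * erfDeriv u) u := by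
  refine (((hasDerivAt_pow 2 u).fun_neg.exp).const_mul (2 / √π)).congr_deriv ?_
  rw [erfDeriv]
  push_cast
  ring

lemma abs_mul_erfDeriv_le_two (u : ℝ) : |-2 * u * erfDeriv u| ≤ 2 := by
  have hu : |2 * u| * exp (-u ^ 2) ≤ 1 := by
    rw [exp_neg, ← div_eq_mul_inv, div_le_one (exp_pos _), abs_mul, abs_two]
    nlinarith [add_one_le_exp (u ^ 2), sq_abs u, sq_nonneg (|u| - 1)]
  rw [erfDeriv, show -2 * u * (2 / √π * exp (-u ^ 2)) = 2 / √π * (-(2 * u) * exp (-u ^ 2)) by ring,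
    abs_mul, abs_mul, abs_neg, abs_of_pos (exp_pos _),
    abs_of_pos (by positivity : (0 : ℝ) < 2 / √π)]
  calc 2 / √π * (|2 * u| * exp (-u ^ 2)) ≤ 2 * 1 := by
        gcongr
        exact two_div_sqrt_pi_le_two
    _ = 2 := mul_one 2

section TranslateIntegral

variable {μ : Measure ℝ} {f f' : ℝ → ℝ} {B : ℝ}

lemma integrable_comp_const_add_of_abs_le [IsFiniteMeasure μ] (hf : Measurable f)
    (hB : ∀ x, |f x| ≤ B) (t : ℝ) : Integrable (fun g => f (t + g)) μ :=
  .of_bound (hf.comp (measurable_const_add t)).aestronglyMeasurable B (.of_forall fun _ => hB _)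

lemma abs_integral_comp_const_add_le [IsProbabilityMeasure μ] (hB : ∀ x, |f x| ≤ B) (t : ℝ) :
    |∫ g, f (t + g) ∂μ| ≤ B := by
  simpa using norm_integral_le_of_norm_le_const (μ := μ) (f := fun g => f (t + g))
    (.of_forall fun g => hB (t + g))

lemma hasDerivAt_integral_comp_const_add [IsFiniteMeasure μ] {Bf : ℝ}
    (hf : ∀ x, HasDerivAt f (f' x) x) (hfB : ∀ x, |f x| ≤ Bf) (hf'B : ∀ x, |f' x| ≤ B) (t : ℝ) :
    HasDerivAt (fun t => ∫ g, f (t + g) ∂μ) (∫ g, f' (t + g) ∂μ) t := by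
  have hfm : Measurable f := (continuous_iff_continuousAt.2 fun x => (hf x).continuousAt).measurable
  have hf'm : Measurable f' := by
    rw [show f' = deriv f from funext fun x => (hf x).deriv.symm]
    exact measurable_deriv f
  exact (hasDerivAt_integral_of_dominated_loc_of_deriv_le (bound := fun _ => B) univ_mem
    (.of_forall fun s => (hfm.comp (measurable_const_add s)).aestronglyMeasurable)
    (integrable_comp_const_add_of_abs_le hfm hfB t)
    (hf'm.comp (measurable_const_add t)).aestronglyMeasurable
    (.of_forall fun g s _ => hf'B (s + g)) (integrable_const B)
    (.of_forall fun g s _ => (hf (s + g)).comp_add_const s g)).2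

end TranslateIntegral

lemma hasDerivAt_erf_sq (u : ℝ) : HasDerivAt (fun u => erf u ^ 2) (2 * erf u * erfDeriv u) u := by
  simpa [mul_comm, mul_assoc, mul_left_comm] using (hasDerivAt_erf_s8 u).fun_pow 2

lemma hasDerivAt_erf_mul_erfDeriv (u : ℝ) :
    HasDerivAt (fun u => 2 * erf u * erfDeriv u)
      (2 * erfDeriv u * erfDeriv u + 2 * erf u * (-2 * u * erfDeriv u)) u :=
  ((hasDerivAt_erf_s8 u).const_mul 2).mul (hasDerivAt_erfDeriv u)

lemma abs_erf_sq_le (u : ℝ) : |erf u ^ 2| ≤ 4 := by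
  rw [abs_pow]
  nlinarith [abs_erf_le_two u, abs_nonneg (erf u)]

lemma abs_erf_mul_erfDeriv_le (u : ℝ) : |2 * erf u * erfDeriv u| ≤ 8 := by
  rw [abs_mul, abs_mul, abs_two]
  nlinarith [abs_erf_le_two u, abs_erfDeriv_le_two u, abs_nonneg (erf u), abs_nonneg (erfDeriv u)]

lemma abs_deriv_erf_mul_erfDeriv_le (u : ℝ) :
    |2 * erfDeriv u * erfDeriv u + 2 * erf u * (-2 * u * erfDeriv u)| ≤ 16 := by
  refine (abs_add_le _ _).trans ?_
  rw [abs_mul, abs_mul, abs_mul, abs_mul, abs_two]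
  nlinarith [abs_erf_le_two u, abs_erfDeriv_le_two u, abs_mul_erfDeriv_le_two u,
    abs_nonneg (erf u), abs_nonneg (erfDeriv u), abs_nonneg (-2 * u * erfDeriv u)]

noncomputable def zetaDeriv (t s : ℝ) : ℝ :=
  ∫ g, 2 * erf (t + g) * erfDeriv (t + g) ∂(gaussianReal 0 s.toNNReal)

lemma hasDerivAt_zeta (t s : ℝ) : HasDerivAt (fun t => zeta t s) (zetaDeriv t s) t :=
  hasDerivAt_integral_comp_const_add hasDerivAt_erf_sq abs_erf_sq_le abs_erf_mul_erfDeriv_le t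

lemma abs_zetaDeriv_le (t s : ℝ) : |zetaDeriv t s| ≤ 8 :=
  abs_integral_comp_const_add_le abs_erf_mul_erfDeriv_le t

lemma zetaDeriv_lipschitz (s x y : ℝ) : |zetaDeriv y s - zetaDeriv x s| ≤ 16 * |y - x| :=
  abs_sub_le_of_hasDerivAt
    (hasDerivAt_integral_comp_const_add hasDerivAt_erf_mul_erfDeriv abs_erf_mul_erfDeriv_le
      abs_deriv_erf_mul_erfDeriv_le)
    (abs_integral_comp_const_add_le abs_deriv_erf_mul_erfDeriv_le) x y

noncomputable def projStep (α a x : ℝ) : ℝ :=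
  (x - α * a * (1 - x ^ 2)) / √(1 + α ^ 2 * a ^ 2 * (1 - x ^ 2))

section ProjStep

variable {α a x : ℝ}

lemma one_sub_sq_mem_Icc (hx : |x| ≤ 1) : 1 - x ^ 2 ∈ Icc 0 1 :=
  ⟨by nlinarith [sq_abs x, abs_nonneg x], by nlinarith⟩

lemma abs_projStep_le_one (hx : |x| ≤ 1) : |projStep α a x| ≤ 1 := by
  have hw := (one_sub_sq_mem_Icc hx).1
  have hS : 0 < √(1 + α ^ 2 * a ^ 2 * (1 - x ^ 2)) := Real.sqrt_pos.2 (by positivity)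
  rw [projStep, abs_div, abs_of_pos hS, div_le_one hS]
  -- `1 + α²a²w - (x - αaw)² = w (1 + αax)²` with `w = 1 - x²`
  exact Real.abs_le_sqrt (by nlinarith [mul_nonneg hw (sq_nonneg (1 + α * a * x))])

lemma sqrt_one_add_mem_Icc {s : ℝ} (hs : 0 ≤ s) : √(1 + s) ∈ Icc 1 (1 + s / 2) :=
  ⟨Real.one_le_sqrt.2 (by linarith), Real.sqrt_le_iff.2 ⟨by positivity, by nlinarith⟩⟩

lemma projStep_sub_mul_sqrt (hx : |x| ≤ 1) :
    (projStep α a x - x) * √(1 + α ^ 2 * a ^ 2 * (1 - x ^ 2)) =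
      -(α * a * (1 - x ^ 2)) - x * (√(1 + α ^ 2 * a ^ 2 * (1 - x ^ 2)) - 1) := by
  have hw := (one_sub_sq_mem_Icc hx).1
  have hS : 0 < √(1 + α ^ 2 * a ^ 2 * (1 - x ^ 2)) := Real.sqrt_pos.2 (by positivity)
  rw [projStep, sub_mul, div_mul_cancel₀ _ hS.ne']
  ring

lemma abs_projStep_sub_le (hx : |x| ≤ 1) (hα : 0 ≤ α) (hαa : α * |a| ≤ 2) :
    |projStep α a x - x| ≤ 2 * α * |a| * (1 - x ^ 2) := by
  have key := projStep_sub_mul_sqrt (α := α) (a := a) hx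
  obtain ⟨hw0, hw1⟩ := one_sub_sq_mem_Icc hx
  set w := 1 - x ^ 2
  have hs : 0 ≤ α ^ 2 * a ^ 2 * w := by positivity
  obtain ⟨hS1, hS2⟩ := sqrt_one_add_mem_Icc hs
  set S := √(1 + α ^ 2 * a ^ 2 * w)
  have hnum : |-(α * a * w) - x * (S - 1)| ≤ α * |a| * w + (S - 1) := by
    refine (abs_sub _ _).trans (add_le_add ?_ ?_)
    · rw [abs_neg, abs_mul, abs_mul, abs_of_nonneg hα, abs_of_nonneg hw0]
    · rw [abs_mul, abs_of_nonneg (by linarith : 0 ≤ S - 1)]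
      nlinarith
  have hαa2 : α ^ 2 * a ^ 2 * w / 2 ≤ α * |a| * w := by
    rw [← sq_abs a]
    nlinarith [mul_nonneg (mul_nonneg hα (abs_nonneg a)) hw0]
  have hD : |projStep α a x - x| * S ≤ 2 * α * |a| * w * S := by
    rw [← abs_of_pos (by linarith : 0 < S), ← abs_mul, key, abs_of_pos (by linarith : 0 < S)]
    nlinarith [mul_nonneg (mul_nonneg hα (abs_nonneg a)) hw0]
  exact le_of_mul_le_mul_right hD (by linarith)

lemma mul_projStep_sub_le (hx : |x| ≤ 1) (hα : 0 ≤ α) (hαa : α * |a| ≤ 1 / 4) :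
    a * (projStep α a x - x) ≤ -(3 / 4) * α * a ^ 2 * (1 - x ^ 2) := by
  have key := projStep_sub_mul_sqrt (α := α) (a := a) hx
  obtain ⟨hw0, hw1⟩ := one_sub_sq_mem_Icc hx
  set w := 1 - x ^ 2
  have hs : 0 ≤ α ^ 2 * a ^ 2 * w := by positivity
  obtain ⟨hS1, hS2⟩ := sqrt_one_add_mem_Icc hs
  set S := √(1 + α ^ 2 * a ^ 2 * w)
  have hA : 0 ≤ α * a ^ 2 * w := by positivity
  have hax : -(a * x) ≤ |a| := (neg_le_abs _).trans (by rw [abs_mul]; nlinarith [abs_nonneg a])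
  -- `S - 1 ≤ α²a²w/2`, so the curvature term costs at most a factor `1 - α|a|/2 ≥ 7/8`
  have hcurv : -(a * x) * (S - 1) ≤ α * |a| / 2 * (α * a ^ 2 * w) := by
    calc -(a * x) * (S - 1) ≤ |a| * (α ^ 2 * a ^ 2 * w / 2) :=
          mul_le_mul hax (by linarith) (by linarith) (abs_nonneg a)
      _ = α * |a| / 2 * (α * a ^ 2 * w) := by ring
  have hS : S ≤ 1 + 1 / 32 := by
    have : α ^ 2 * a ^ 2 * w ≤ 1 / 16 := by
      have h : (α * |a|) ^ 2 ≤ 1 / 16 := by nlinarith [mul_nonneg hα (abs_nonneg a)]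
      calc α ^ 2 * a ^ 2 * w = (α * |a|) ^ 2 * w := by rw [mul_pow, sq_abs]
        _ ≤ 1 / 16 * 1 := mul_le_mul h hw1 hw0 (by norm_num)
        _ = 1 / 16 := mul_one _
    linarith
  have hD : a * (projStep α a x - x) * S ≤ -(3 / 4) * α * a ^ 2 * w * S := by
    rw [mul_assoc, key]
    nlinarith
  exact le_of_mul_le_mul_right hD (by linarith)

end ProjStep

section AffineDescent

variable {F F' H H' : ℝ → ℝ} {M : ℝ}

lemma affine_sub_le (hF : ∀ x, HasDerivAt F (F' x) x) (hH : ∀ x, HasDerivAt H (H' x) x)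
    (hF'B : ∀ x, |F' x| ≤ M) (hF'L : ∀ x y, |F' y - F' x| ≤ M * |y - x|)
    (hH'L : ∀ x y, |H' y - H' x| ≤ M * |y - x|) {κ ν κ' ν' : ℝ} (hν' : |ν'| ≤ 1) :
    ν' * F κ' + H κ' - (ν * F κ + H κ) ≤ (ν * F' κ + H' κ) * (κ' - κ) + F κ * (ν' - ν)
      + M * (2 * (κ' - κ) ^ 2 + |κ' - κ| * |ν' - ν|) := by
  have hFT := abs_sub_sub_mul_le_of_lipschitz_deriv hF hF'L κ κ'
  have hHT := abs_sub_sub_mul_le_of_lipschitz_deriv hH hH'L κ κ'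
  have hFr : ν' * (F κ' - F κ - F' κ * (κ' - κ)) ≤ M * (κ' - κ) ^ 2 :=
    (le_abs_self _).trans <| by
      rw [abs_mul]; exact (mul_le_of_le_one_left (abs_nonneg _) hν').trans hFT
  have hcross : (ν' - ν) * F' κ * (κ' - κ) ≤ M * (|κ' - κ| * |ν' - ν|) :=
    (le_abs_self _).trans <| by
      rw [abs_mul, abs_mul]
      nlinarith [hF'B κ, abs_nonneg (ν' - ν), abs_nonneg (κ' - κ),
        mul_nonneg (abs_nonneg (ν' - ν)) (abs_nonneg (κ' - κ))]
  nlinarith [le_abs_self (H κ' - H κ - H' κ * (κ' - κ))]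

lemma quadratic_remainder_le {α a b w₁ w₂ Δ₁ Δ₂ : ℝ} (hM : 0 ≤ M) (hα : 0 ≤ α)
    (hαM : α * M ≤ 1 / 40) (hw₁ : w₁ ∈ Icc 0 1) (hw₂ : w₂ ∈ Icc 0 1)
    (hΔ₁ : |Δ₁| ≤ 2 * α * |a| * w₁) (hΔ₂ : |Δ₂| ≤ 2 * α * |b| * w₂) :
    M * (2 * Δ₁ ^ 2 + |Δ₁| * |Δ₂|) ≤ α / 4 * (a ^ 2 * w₁ + b ^ 2 * w₂) := by
  obtain ⟨hw₁0, hw₁1⟩ := hw₁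
  obtain ⟨hw₂0, hw₂1⟩ := hw₂
  have hA : 0 ≤ |a| * w₁ := by positivity
  have hB : 0 ≤ |b| * w₂ := by positivity
  have hsq : Δ₁ ^ 2 ≤ 4 * α ^ 2 * (|a| * w₁) ^ 2 := by
    rw [← sq_abs Δ₁]; nlinarith [abs_nonneg Δ₁]
  have hprod : |Δ₁| * |Δ₂| ≤ 4 * α ^ 2 * ((|a| * w₁) * (|b| * w₂)) := by
    nlinarith [mul_le_mul hΔ₁ hΔ₂ (abs_nonneg _) (by positivity)]
  have hA2 : (|a| * w₁) ^ 2 ≤ a ^ 2 * w₁ := by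
    rw [mul_pow, sq_abs]
    exact mul_le_mul_of_nonneg_left (by nlinarith) (sq_nonneg a)
  have hAB : (|a| * w₁) * (|b| * w₂) ≤ (a ^ 2 * w₁ + b ^ 2 * w₂) / 2 := by
    have hB2 : (|b| * w₂) ^ 2 ≤ b ^ 2 * w₂ := by
      rw [mul_pow, sq_abs]
      exact mul_le_mul_of_nonneg_left (by nlinarith) (sq_nonneg b)
    nlinarith [sq_nonneg (|a| * w₁ - |b| * w₂)]
  have h₁ : Δ₁ ^ 2 ≤ 4 * α ^ 2 * (a ^ 2 * w₁ + b ^ 2 * w₂) :=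
    hsq.trans (by gcongr; nlinarith [mul_nonneg (sq_nonneg b) hw₂0])
  have h₂ : |Δ₁| * |Δ₂| ≤ 4 * α ^ 2 * ((a ^ 2 * w₁ + b ^ 2 * w₂) / 2) :=
    hprod.trans (by gcongr)
  calc M * (2 * Δ₁ ^ 2 + |Δ₁| * |Δ₂|)
      ≤ M * (2 * (4 * α ^ 2 * (a ^ 2 * w₁ + b ^ 2 * w₂))
          + 4 * α ^ 2 * ((a ^ 2 * w₁ + b ^ 2 * w₂) / 2)) := by gcongr
    _ = 10 * (α * M) * α * (a ^ 2 * w₁ + b ^ 2 * w₂) := by ring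
    _ ≤ 10 * (1 / 40) * α * (a ^ 2 * w₁ + b ^ 2 * w₂) := by gcongr
    _ = α / 4 * (a ^ 2 * w₁ + b ^ 2 * w₂) := by ring

theorem affine_projStep_descent (hF : ∀ x, HasDerivAt F (F' x) x)
    (hH : ∀ x, HasDerivAt H (H' x) x) (hFB : ∀ x, |F x| ≤ M) (hF'B : ∀ x, |F' x| ≤ M)
    (hH'B : ∀ x, |H' x| ≤ M) (hF'L : ∀ x y, |F' y - F' x| ≤ M * |y - x|)
    (hH'L : ∀ x y, |H' y - H' x| ≤ M * |y - x|) {α κ ν : ℝ} (hα : 0 ≤ α)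
    (hαM : α * M ≤ 1 / 40) (hκ : |κ| ≤ 1) (hν : |ν| ≤ 1) :
    projStep α (F κ) ν * F (projStep α (ν * F' κ + H' κ) κ) + H (projStep α (ν * F' κ + H' κ) κ)
        - (ν * F κ + H κ)
      ≤ -(α / 2) * ((ν * F' κ + H' κ) ^ 2 * (1 - κ ^ 2) + F κ ^ 2 * (1 - ν ^ 2)) := by
  set a := ν * F' κ + H' κ
  set b := F κ
  have hM : 0 ≤ M := (abs_nonneg _).trans (hFB 0)
  have ha : |a| ≤ 2 * M := (abs_add_le _ _).trans <| by
    rw [abs_mul]; nlinarith [hF'B κ, hH'B κ, abs_nonneg (F' κ)]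
  have hαa : α * |a| ≤ 1 / 4 := by nlinarith
  have hαb : α * |b| ≤ 1 / 4 := by nlinarith [hFB κ]
  have hmain := affine_sub_le (κ := κ) (ν := ν) (κ' := projStep α a κ) (ν' := projStep α b ν)
    hF hH hF'B hF'L hH'L (abs_projStep_le_one hν)
  have hrem := quadratic_remainder_le hM hα hαM (one_sub_sq_mem_Icc hκ) (one_sub_sq_mem_Icc hν)
    (abs_projStep_sub_le (a := a) hκ hα (by linarith))
    (abs_projStep_sub_le (a := b) hν hα (by linarith))
  linarith [mul_projStep_sub_le hκ hα hαa, mul_projStep_sub_le hν hα hαb]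

end AffineDescent

lemma abs_const_mul_comp_mul_mul_sub_le {g : ℝ → ℝ} {K : ℝ}
    (hg : ∀ x y, |g y - g x| ≤ K * |y - x|) (k c x y : ℝ) :
    |k * (g (c * y) * c) - k * (g (c * x) * c)| ≤ |k| * c ^ 2 * K * |y - x| := by
  have h := hg (c * x) (c * y)
  rw [← mul_sub, abs_mul] at h
  rw [show k * (g (c * y) * c) - k * (g (c * x) * c) = k * c * (g (c * y) - g (c * x)) by ring,
    abs_mul, abs_mul, ← sq_abs c, sq]
  calc |k| * |c| * |g (c * y) - g (c * x)| ≤ |k| * |c| * (K * (|c| * |y - x|)) := by gcongr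
    _ = |k| * (|c| * |c|) * K * |y - x| := by ring

namespace Rred

variable (d L : ℕ) (γ lam ε : ℝ)

noncomputable def erfScale : ℝ := lam * √((d : ℝ) / 2) / √(1 + 2 * lam ^ 2 * γ ^ 2)

noncomputable def zetaScale : ℝ := lam * √((d : ℝ) / 2)

noncomputable def slope (κ : ℝ) : ℝ := -2 * γ ^ 2 * erf (erfScale d γ lam * κ)

noncomputable def slopeDeriv (κ : ℝ) : ℝ :=
  -2 * γ ^ 2 * (erfDeriv (erfScale d γ lam * κ) * erfScale d γ lam)

noncomputable def offset (κ : ℝ) : ℝ :=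
  γ ^ 2 + γ ^ 2 * zeta (zetaScale d lam * κ) (lam ^ 2 * γ ^ 2)
    + ((L : ℝ) - 1) * zeta 0 (lam ^ 2) + ε ^ 2

noncomputable def offsetDeriv (κ : ℝ) : ℝ :=
  γ ^ 2 * (zetaDeriv (zetaScale d lam * κ) (lam ^ 2 * γ ^ 2) * zetaScale d lam)

noncomputable def lipConst : ℝ :=
  16 * γ ^ 2 * (1 + |erfScale d γ lam| + |zetaScale d lam|) ^ 2

lemma eq_mul_slope_add_offset (κ ν : ℝ) :
    Rred d L γ lam ε κ ν = ν * slope d γ lam κ + offset d L γ lam ε κ := by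
  rw [Rred, mul_div_right_comm, slope, offset, erfScale, zetaScale]
  ring

lemma hasDerivAt_slope (κ : ℝ) : HasDerivAt (slope d γ lam) (slopeDeriv d γ lam κ) κ :=
  ((hasDerivAt_erf_s8 _).comp κ ((hasDerivAt_id κ).const_mul _)).const_mul _ |>.congr_deriv
    (by rw [slopeDeriv, mul_one]; rfl)

lemma hasDerivAt_offset (κ : ℝ) : HasDerivAt (offset d L γ lam ε) (offsetDeriv d γ lam κ) κ :=
  (((((hasDerivAt_zeta _ _).comp κ ((hasDerivAt_id κ).const_mul _)).const_mul _).const_add _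
    ).add_const _).add_const _ |>.congr_deriv (by rw [offsetDeriv, mul_one]; rfl)

lemma dkR_eq (κ ν : ℝ) :
    dkR d L γ lam ε κ ν = ν * slopeDeriv d γ lam κ + offsetDeriv d γ lam κ := by
  simp only [dkR, eq_mul_slope_add_offset]
  exact (((hasDerivAt_slope d γ lam κ).const_mul ν).add (hasDerivAt_offset d L γ lam ε κ)).deriv

lemma dvR_eq (κ ν : ℝ) : dvR d L γ lam ε κ ν = slope d γ lam κ := by
  simp only [dvR, eq_mul_slope_add_offset]
  exact ((hasDerivAt_mul_const _).add_const _).deriv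

lemma scale_bounds : 1 ≤ (1 + |erfScale d γ lam| + |zetaScale d lam|) ^ 2 ∧
    |erfScale d γ lam| ≤ (1 + |erfScale d γ lam| + |zetaScale d lam|) ^ 2 ∧
    erfScale d γ lam ^ 2 ≤ (1 + |erfScale d γ lam| + |zetaScale d lam|) ^ 2 ∧
    |zetaScale d lam| ≤ (1 + |erfScale d γ lam| + |zetaScale d lam|) ^ 2 ∧
    zetaScale d lam ^ 2 ≤ (1 + |erfScale d γ lam| + |zetaScale d lam|) ^ 2 := by
  have ha := abs_nonneg (erfScale d γ lam)
  have hc := abs_nonneg (zetaScale d lam)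
  rw [← sq_abs (erfScale d γ lam), ← sq_abs (zetaScale d lam)]
  refine ⟨?_, ?_, ?_, ?_, ?_⟩ <;> nlinarith

lemma abs_slope_le (κ : ℝ) : |slope d γ lam κ| ≤ lipConst d γ lam := by
  obtain ⟨h1, -⟩ := scale_bounds d γ lam
  rw [slope, lipConst, abs_mul, abs_mul, abs_neg, abs_two, abs_of_nonneg (sq_nonneg γ)]
  nlinarith [abs_erf_le_two (erfScale d γ lam * κ), sq_nonneg γ]

lemma abs_slopeDeriv_le (κ : ℝ) : |slopeDeriv d γ lam κ| ≤ lipConst d γ lam := by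
  obtain ⟨-, h, -⟩ := scale_bounds d γ lam
  rw [slopeDeriv, lipConst, abs_mul, abs_mul, abs_mul, abs_neg, abs_two,
    abs_of_nonneg (sq_nonneg γ)]
  have := mul_le_mul (abs_erfDeriv_le_two (erfScale d γ lam * κ)) h (abs_nonneg _) zero_le_two
  nlinarith [mul_le_mul_of_nonneg_left this (sq_nonneg γ)]

lemma slopeDeriv_lipschitz (x y : ℝ) :
    |slopeDeriv d γ lam y - slopeDeriv d γ lam x| ≤ lipConst d γ lam * |y - x| := by
  obtain ⟨-, -, h, -⟩ := scale_bounds d γ lam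
  refine (abs_const_mul_comp_mul_mul_sub_le (fun x y => abs_sub_le_of_hasDerivAt
    hasDerivAt_erfDeriv abs_mul_erfDeriv_le_two x y) _ _ x y).trans ?_
  rw [lipConst, abs_mul, abs_neg, abs_two, abs_of_nonneg (sq_nonneg γ)]
  refine mul_le_mul_of_nonneg_right ?_ (abs_nonneg _)
  nlinarith [mul_le_mul_of_nonneg_left h (sq_nonneg γ)]

lemma abs_offsetDeriv_le (κ : ℝ) : |offsetDeriv d γ lam κ| ≤ lipConst d γ lam := by
  obtain ⟨-, -, -, h, -⟩ := scale_bounds d γ lam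
  rw [offsetDeriv, lipConst, abs_mul, abs_mul, abs_of_nonneg (sq_nonneg γ)]
  have := mul_le_mul (abs_zetaDeriv_le (zetaScale d lam * κ) (lam ^ 2 * γ ^ 2)) h
    (abs_nonneg _) (by norm_num : (0 : ℝ) ≤ 8)
  nlinarith [mul_le_mul_of_nonneg_left this (sq_nonneg γ)]

lemma offsetDeriv_lipschitz (x y : ℝ) :
    |offsetDeriv d γ lam y - offsetDeriv d γ lam x| ≤ lipConst d γ lam * |y - x| := by
  obtain ⟨-, -, -, -, h⟩ := scale_bounds d γ lam
  refine (abs_const_mul_comp_mul_mul_sub_le (zetaDeriv_lipschitz _) _ _ x y).trans ?_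
  rw [lipConst, abs_of_nonneg (sq_nonneg γ)]
  refine mul_le_mul_of_nonneg_right ?_ (abs_nonneg _)
  nlinarith [mul_le_mul_of_nonneg_left h (sq_nonneg γ)]

end Rred

theorem stmt8_general (d L : ℕ) (γ lam ε : ℝ) (hγ : 0 < γ) :
    ∃ abar : ℝ, 0 < abar ∧ ∀ α : ℝ, 0 < α → α ≤ abar → ∀ p ∈ sqIcc,
      Rred d L γ lam ε (pgd d L γ lam ε α p).1 (pgd d L γ lam ε α p).2
          - Rred d L γ lam ε p.1 p.2
        ≤ -(α / 2) * ((dkR d L γ lam ε p.1 p.2) ^ 2 * (1 - p.1 ^ 2)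
            + (dvR d L γ lam ε p.1 p.2) ^ 2 * (1 - p.2 ^ 2)) := by
  have hM : 0 < Rred.lipConst d γ lam := by rw [Rred.lipConst]; positivity
  refine ⟨1 / (40 * Rred.lipConst d γ lam), by positivity, fun α hα hαbar p hp => ?_⟩
  have hαM : α * Rred.lipConst d γ lam ≤ 1 / 40 := by
    rw [le_div_iff₀ (by positivity)] at hαbar
    linarith
  have hpgd : pgd d L γ lam ε α p =
      (projStep α (dkR d L γ lam ε p.1 p.2) p.1, projStep α (dvR d L γ lam ε p.1 p.2) p.2) := rfl
  rw [hpgd, Rred.dkR_eq, Rred.dvR_eq, Rred.eq_mul_slope_add_offset, Rred.eq_mul_slope_add_offset]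
  exact affine_projStep_descent (Rred.hasDerivAt_slope d γ lam) (Rred.hasDerivAt_offset d L γ lam ε)
    (Rred.abs_slope_le d γ lam) (Rred.abs_slopeDeriv_le d γ lam) (Rred.abs_offsetDeriv_le d γ lam)
    (Rred.slopeDeriv_lipschitz d γ lam) (Rred.offsetDeriv_lipschitz d γ lam) hα.le hαM
    (abs_le.2 hp.1) (abs_le.2 hp.2)

/-- Descent lemma: for small enough step size, one PGD step decreases the reduced risk
by at least `(α/2)·[(∂κR)²(1−κ²) + (∂νR)²(1−ν²)]`. -/
theorem stmt8 (d L : ℕ) (hd : 1 ≤ d) (hL : 1 ≤ L) (γ lam ε : ℝ)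
    (hγ : 0 < γ) (hlam : 0 < lam) (hε : 0 ≤ ε) :
    ∃ abar : ℝ, 0 < abar ∧ ∀ α : ℝ, 0 < α → α ≤ abar → ∀ p ∈ sqIcc,
      Rred d L γ lam ε (pgd d L γ lam ε α p).1 (pgd d L γ lam ε α p).2
          - Rred d L γ lam ε p.1 p.2
        ≤ -(α / 2) * ((dkR d L γ lam ε p.1 p.2) ^ 2 * (1 - p.1 ^ 2)
            + (dvR d L γ lam ε p.1 p.2) ^ 2 * (1 - p.2 ^ 2)) :=
  stmt8_general d L γ lam ε hγ
end
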